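/- Let (Ω, F, P) be a probability space, let (G_n) be a filtration of sub-σ-fields of F, let Y_∞ and Y_n (n ≥ 1) be real random variables with Y_n measurable with respect to G_n, and let (a_n) be a sequence of real constants with a_n → ∞. For each n let K_n(ω, ·) be a regular conditional distribution of a_n(Y_n − Y_∞) given G_n. If for almost every ω the measures K_n(ω, ·) converge weakly to a probability measure κ_ω on ℝ that is non-degenerate (i.e., not a Dirac point mass), then Y_∞ has no point masses: P(Y_∞ = y) = 0 for every y ∈ ℝ. -/

import Mathlib

open MeasureTheory ProbabilityTheory Filter Topology

namespace RRUPaper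

/-- A two-color randomly reinforced urn model on a probability space `(Ω, P)`.
Colors are indexed by `Fin 2` (index `0` = color 1, index `1` = color 2);
draws are indexed by `1, 2, …` (index `0` of `U`, `X` is an irrelevant dummy). -/
structure RRU {Ω : Type} [MeasurableSpace Ω] (P : Measure Ω) where
  /-- `U n k` : the random reinforcement of color `k` at draw `n` (for `n ≥ 1`). -/
  U : ℕ → Fin 2 → Ω → ℝ
  /-- `X n k = 1` if the ball drawn at draw `n` is of color `k`, else `0` (for `n ≥ 1`). -/
  X : ℕ → Fin 2 → Ω → ℝ
  /-- `Y n k` : the amount of color-`k` balls after `n` draws. -/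
  Y : ℕ → Fin 2 → Ω → ℝ
  /-- the filtration generated by the observations up to time `n`. -/
  F : ℕ → MeasurableSpace Ω
  meas_U : ∀ n k, Measurable (U n k)
  meas_X : ∀ n k, Measurable (X n k)
  U_nonneg : ∀ n k, ∀ᵐ ω ∂P, 0 ≤ U (n + 1) k ω
  X_01 : ∀ n k ω, X (n + 1) k ω = 0 ∨ X (n + 1) k ω = 1
  X_sum : ∀ n ω, X (n + 1) 0 ω + X (n + 1) 1 ω = 1
  Y0_pos : ∀ k ω, 0 < Y 0 k ω
  Y0_const : ∀ k ω ω', Y 0 k ω = Y 0 k ω'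
  Y_rec : ∀ n k ω, Y (n + 1) k ω = Y n k ω + X (n + 1) k ω * U (n + 1) k ω
  F_def : ∀ n, F n = ⨆ l ∈ Set.Icc 1 n, ⨆ k : Fin 2,
      (MeasurableSpace.comap (U l k) inferInstance ⊔ MeasurableSpace.comap (X l k) inferInstance)
  /-- the reinforcement vectors are independent … -/
  indep_U : iIndepFun (fun n ω => (U (n + 1) 0 ω, U (n + 1) 1 ω)) P
  /-- … and identically distributed. -/
  ident_U : ∀ n, IdentDistrib (fun ω => (U (n + 1) 0 ω, U (n + 1) 1 ω))
      (fun ω => (U 1 0 ω, U 1 1 ω)) P P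
  U_int : ∀ k, Integrable (U 1 k) P
  mean_pos : ∀ k, 0 < ∫ ω, U 1 k ω ∂P
  /-- `P(X_{n+1,k} = 1 ∣ F_n) = Y_{n,k} / (Y_{n,1} + Y_{n,2})` (as `X` is `{0,1}`-valued,
  this conditional probability is the conditional expectation of `X`). -/
  condX : ∀ n k, P[X (n + 1) k | F n] =ᵐ[P] fun ω => Y n k ω / (Y n 0 ω + Y n 1 ω)
  /-- the next reinforcement vector is independent of `σ(F_n, X_{n+1})`. -/
  indep_next : ∀ n, Indep
      (MeasurableSpace.comap (fun ω => (U (n + 1) 0 ω, U (n + 1) 1 ω)) inferInstance)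
      (F n ⊔ MeasurableSpace.comap (fun ω => (X (n + 1) 0 ω, X (n + 1) 1 ω)) inferInstance) P

namespace RRU

variable {Ω : Type} [MeasurableSpace Ω] {P : Measure Ω}

/-- the mean reinforcement `m_k = E[U_{1,k}]`. -/
noncomputable def m (M : RRU P) (k : Fin 2) : ℝ := ∫ ω, M.U 1 k ω ∂P

/-- `σ_k² = E[(U_{1,k}/m_k)²]`. -/
noncomputable def sigmaSq (M : RRU P) (k : Fin 2) : ℝ := ∫ ω, (M.U 1 k ω / M.m k) ^ 2 ∂P

/-- `σ_k = √(E[(U_{1,k}/m_k)²])`. -/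
noncomputable def sigma (M : RRU P) (k : Fin 2) : ℝ := Real.sqrt (M.sigmaSq k)

/-- the proportion `Z_n` of color-1 balls in the urn. -/
noncomputable def Z (M : RRU P) (n : ℕ) (ω : Ω) : ℝ := M.Y n 0 ω / (M.Y n 0 ω + M.Y n 1 ω)

/-- `N n k` : the number of times color `k` was drawn in the first `n` draws. -/
noncomputable def N (M : RRU P) (n : ℕ) (k : Fin 2) (ω : Ω) : ℝ := ∑ l ∈ Finset.Icc 1 n, M.X l k ω

/-- `ρ = m₁/m₂`. -/
noncomputable def rho (M : RRU P) : ℝ := M.m 0 / M.m 1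

/-- `ψ_n = Y_{n,1} / Y_{n,2}^ρ`. -/
noncomputable def psi (M : RRU P) (n : ℕ) (ω : Ω) : ℝ := M.Y n 0 ω / (M.Y n 1 ω) ^ M.rho

/-- `E[U_{1,k}^r] < ∞` for `k = 1,2`. -/
def HasMoment (M : RRU P) (r : ℝ) : Prop :=
  ∀ k, Integrable (fun ω => |M.U 1 k ω| ^ r) P

end RRU

/-- `σ̃` built from a candidate limit (or current) proportion `Zf`:
`√(Zf(1−Zf)) ⬝ √((1−Zf)σ₁² + Zf σ₂²)`. -/
noncomputable def sigmaTildeOf {Ω : Type} [MeasurableSpace Ω] {P : Measure Ω}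
    (M : RRU P) (Zf : Ω → ℝ) (ω : Ω) : ℝ :=
  Real.sqrt (Zf ω * (1 - Zf ω)) *
    Real.sqrt ((1 - Zf ω) * M.sigmaSq 0 + Zf ω * M.sigmaSq 1)

/-- `W : [0,∞) × Ω' → ℝ` is a standard Brownian motion: measurable in `ω`, a.s. continuous
paths (on `[0,∞)`), starting at `0`, with Gaussian increments `W_t − W_s ∼ N(0, t−s)`
independent of `σ(W_u : u ≤ s)`. -/
def IsStandardBM {Ω' : Type} [MeasurableSpace Ω'] (P' : Measure Ω') (W : ℝ → Ω' → ℝ) : Prop :=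
  (∀ t, Measurable (W t)) ∧
  (∀ᵐ ω ∂P', ContinuousOn (fun t => W t ω) (Set.Ici 0)) ∧
  (∀ᵐ ω ∂P', W 0 ω = 0) ∧
  ∀ s t : ℝ, 0 ≤ s → s ≤ t →
    Measure.map (fun ω => W t ω - W s ω) P' = gaussianReal 0 (Real.toNNReal (t - s)) ∧
    Indep (MeasurableSpace.comap (fun ω => W t ω - W s ω) inferInstance)
      (⨆ u ∈ Set.Icc (0 : ℝ) s, MeasurableSpace.comap (W u) inferInstance) P'

open scoped ENNReal

/-!
Fix `y` and let `A = {Y_∞ = y}`. On `A` the variable `a_n (Y_n - Y_∞)` equals `c_n = a_n (Y_n - y)`,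
which is known at time `n`; so the conditional law `K_n(ω, ·)` must carry the conditional mass of
`A` on the cell of the width-`w` grid that contains `c_n(ω)`. The laws `K_n(ω, ·)` are tight and
`a_n → ∞`, so `Y_n → Y_∞` in probability and `A` is, up to a null set, measurable for `⋁ G_n`;
Lévy's upward theorem then approximates `A` by `G_n`-measurable events. This gives
`P(A) ≤ ∫_A limsup_n sup_j K_n(ω, cell_j) dP`, so this limsup equals `1` for a.e. `ω ∈ A` and every
`w`. But a non-degenerate `κ_ω` charges two balls at positive distance, and once `w` is below that
distance no cell meets both balls, so for a.e. `ω` the limsup is `< 1` for some `w`.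
-/

def gridCell (w : ℝ) (j : ℤ) : Set ℝ := Set.Ico (j * w) ((j + 1) * w)

noncomputable def gridConcentration (ν : Measure ℝ) (w : ℝ) : ℝ≥0∞ := ⨆ j : ℤ, ν (gridCell w j)

section Grid

variable {w : ℝ}

theorem mem_gridCell_floor (hw : 0 < w) (x : ℝ) : x ∈ gridCell w ⌊x / w⌋ := by
  have h₁ := Int.floor_le (x / w)
  have h₂ := Int.lt_floor_add_one (x / w)
  constructor
  · rwa [← le_div_iff₀ hw]
  · rwa [← div_lt_iff₀ hw]

theorem abs_sub_lt_of_mem_gridCell {j : ℤ} {x z : ℝ} (hx : x ∈ gridCell w j)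
    (hz : z ∈ gridCell w j) : |x - z| < w := by
  obtain ⟨hx₁, hx₂⟩ := hx
  obtain ⟨hz₁, hz₂⟩ := hz
  rw [abs_sub_lt_iff]
  constructor <;> linarith

theorem gridConcentration_le_one (ν : Measure ℝ) [IsProbabilityMeasure ν] :
    gridConcentration ν w ≤ 1 :=
  iSup_le fun _ => prob_le_one

theorem gridConcentration_le_max {ν : Measure ℝ} [IsProbabilityMeasure ν] {U₁ U₂ : Set ℝ}
    (hU₁ : MeasurableSet U₁) (hU₂ : MeasurableSet U₂) (hsep : ∀ x ∈ U₁, ∀ z ∈ U₂, w ≤ |x - z|) :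
    gridConcentration ν w ≤ max (1 - ν U₁) (1 - ν U₂) := by
  refine iSup_le fun j => ?_
  by_cases h : Disjoint (gridCell w j) U₁
  · rw [← prob_compl_eq_one_sub hU₁]
    exact le_max_of_le_left (measure_mono h.subset_compl_right)
  · obtain ⟨x, hxj, hxU⟩ := Set.not_disjoint_iff.mp h
    have hdisj : Disjoint (gridCell w j) U₂ := Set.disjoint_left.mpr fun z hzj hzU =>
      (hsep x hxU z hzU).not_gt (abs_sub_lt_of_mem_gridCell hxj hzj)
    rw [← prob_compl_eq_one_sub hU₂]
    exact le_max_of_le_right (measure_mono hdisj.subset_compl_right)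

theorem measurable_gridConcentration {Ω : Type*} [MeasurableSpace Ω] {K : Ω → Measure ℝ}
    (hK : ∀ B, MeasurableSet B → Measurable fun ω => K ω B) :
    Measurable fun ω => gridConcentration (K ω) w :=
  .iSup fun _ => hK _ measurableSet_Ico

end Grid

theorem exists_ne_mem_support_of_ne_dirac {X : Type*} [TopologicalSpace X] [MeasurableSpace X]
    [HereditarilyLindelofSpace X] {μ : Measure X} [IsProbabilityMeasure μ]
    (hμ : ∀ x, μ ≠ Measure.dirac x) : ∃ x ∈ μ.support, ∃ z ∈ μ.support, x ≠ z := by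
  obtain ⟨x, hx⟩ := Measure.nonempty_support (IsProbabilityMeasure.ne_zero μ)
  refine ⟨x, hx, ?_⟩
  by_contra! h
  apply hμ x
  have hae : (id : X → X) =ᵐ[μ] fun _ => x := by
    filter_upwards [Measure.support_mem_ae] with z hz using (h z hz).symm
  rw [← Measure.map_id (μ := μ), Measure.map_congr hae, Measure.map_const, measure_univ, one_smul]

theorem exists_limsup_gridConcentration_lt_one {ν : ℕ → ProbabilityMeasure ℝ}
    {μ : ProbabilityMeasure ℝ} (hν : Tendsto ν atTop (𝓝 μ))
    (hμ : ∀ x, (μ : Measure ℝ) ≠ Measure.dirac x) :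
    ∃ k : ℕ, limsup (fun n => gridConcentration (ν n) (1 / (k + 1))) atTop < 1 := by
  obtain ⟨x₁, hx₁, x₂, hx₂, hne⟩ := exists_ne_mem_support_of_ne_dirac hμ
  obtain ⟨δ, hδ, hδx⟩ : ∃ δ, 0 < δ ∧ 3 * δ = |x₁ - x₂| :=
    ⟨|x₁ - x₂| / 3, by positivity [sub_ne_zero.mpr hne], by ring⟩
  obtain ⟨k, hk⟩ := exists_nat_one_div_lt hδ
  have hsep : ∀ x ∈ Metric.ball x₁ δ, ∀ z ∈ Metric.ball x₂ δ, 1 / (k + 1) ≤ |x - z| := by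
    intro x hx z hz
    rw [Metric.mem_ball, Real.dist_eq] at hx hz
    have := abs_sub_le x₁ x x₂
    have := abs_sub_le x z x₂
    rw [abs_sub_comm] at hx
    linarith
  have hpos : ∀ x ∈ (μ : Measure ℝ).support, 0 < (μ : Measure ℝ) (Metric.ball x δ) :=
    fun x hx => (Measure.mem_support_iff_forall x).mp hx _ (Metric.ball_mem_nhds x hδ)
  obtain ⟨c, hc₀, hc⟩ : ∃ c, 0 < c ∧ c < min ((μ : Measure ℝ) (Metric.ball x₁ δ))
      ((μ : Measure ℝ) (Metric.ball x₂ δ)) :=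
    exists_between (lt_min (hpos x₁ hx₁) (hpos x₂ hx₂))
  have hev : ∀ x, c < (μ : Measure ℝ) (Metric.ball x δ) →
      ∀ᶠ n in atTop, c < (ν n : Measure ℝ) (Metric.ball x δ) := fun x h =>
    eventually_lt_of_lt_liminf <|
      h.trans_le (ProbabilityMeasure.le_liminf_measure_open_of_tendsto hν Metric.isOpen_ball)
  refine ⟨k, lt_of_le_of_lt (limsup_le_of_le (by isBoundedDefault) ?_)
    (ENNReal.sub_lt_self ENNReal.one_ne_top one_ne_zero hc₀.ne')⟩
  filter_upwards [hev x₁ (hc.trans_le (min_le_left _ _)), hev x₂ (hc.trans_le (min_le_right _ _))]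
    with n h₁ h₂
  refine (gridConcentration_le_max measurableSet_ball measurableSet_ball hsep).trans
    (max_le ?_ ?_) <;> gcongr

theorem tendsto_measure_norm_gt_of_tendsto {E : Type*} [NormedAddCommGroup E] [CompleteSpace E]
    [SecondCountableTopology E] [MeasurableSpace E] [BorelSpace E] {ν : ℕ → ProbabilityMeasure E}
    {μ : ProbabilityMeasure E} (hν : Tendsto ν atTop (𝓝 μ)) {b : ℕ → ℝ}
    (hb : Tendsto b atTop atTop) :
    Tendsto (fun n => (ν n : Measure E) {x | b n < ‖x‖}) atTop (𝓝 0) := by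
  have hcomp : IsCompact (closure (Set.range ν)) :=
    hν.isCompact_insert_range.of_isClosed_subset isClosed_closure
      (closure_minimal (Set.subset_insert _ _) hν.isCompact_insert_range.isClosed)
  have htail := (tendsto_measure_norm_gt_of_isTightMeasureSet
    (isTightMeasureSet_of_isCompact_closure hcomp)).comp hb
  refine tendsto_of_tendsto_of_tendsto_of_le_of_le tendsto_const_nhds htail (fun _ => zero_le)
    fun n => ?_
  exact le_biSup (fun (ρ : Measure E) => ρ {x | b n < ‖x‖}) ⟨ν n, ⟨n, rfl⟩, rfl⟩

section Approximation

variable {Ω : Type*} [m0 : MeasurableSpace Ω] {P : Measure Ω}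

theorem measure_le_setLIntegral_limsup [IsFiniteMeasure P] {A : Set Ω} {S : ℕ → Set Ω}
    {f : ℕ → Ω → ℝ≥0∞} (hA : MeasurableSet A) (hS : ∀ n, MeasurableSet (S n))
    (hf : ∀ n, Measurable (f n)) (hf_le : ∀ n ω, f n ω ≤ 1)
    (hSA : ∀ᵐ ω ∂P, ∀ᶠ n in atTop, (ω ∈ S n ↔ ω ∈ A))
    (hbound : ∀ n, P (A ∩ S n) ≤ ∫⁻ ω in S n, f n ω ∂P) :
    P A ≤ ∫⁻ ω in A, limsup (fun n => f n ω) atTop ∂P := by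
  have hdiff : Tendsto (fun n => P (A \ S n)) atTop (𝓝 0) := by
    simpa using tendsto_measure_of_ae_tendsto_indicator (A := ∅) atTop MeasurableSet.empty
      (fun n => hA.diff (hS n)) hA (measure_ne_top P A) (.of_forall fun _ => Set.sdiff_subset)
      (by filter_upwards [hSA] with ω hω; filter_upwards [hω] with n hn; simp [hn])
  have hfatou : limsup (fun n => ∫⁻ ω, (S n).indicator (f n) ω ∂P) atTop ≤
      ∫⁻ ω, A.indicator (fun ω => limsup (fun n => f n ω) atTop) ω ∂P := by
    refine (limsup_lintegral_le 1 (fun n => (hf n).indicator (hS n))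
      (fun n => .of_forall fun ω => Set.indicator_le (fun ω _ => hf_le n ω) ω) (by simp)).trans
      (lintegral_mono_ae ?_)
    filter_upwards [hSA] with ω hω
    by_cases hωA : ω ∈ A
    · rw [Set.indicator_of_mem hωA]
      refine (limsup_congr ?_).le
      filter_upwards [hω] with n hn
      rw [Set.indicator_of_mem (hn.mpr hωA)]
    · rw [Set.indicator_of_notMem hωA]
      refine ((limsup_congr ?_).trans (limsup_const 0)).le
      filter_upwards [hω] with n hn
      rw [Set.indicator_of_notMem (hωA ∘ hn.mp)]
  have hsplit : ∀ n, P A ≤ ∫⁻ ω, (S n).indicator (f n) ω ∂P + P (A \ S n) := fun n => by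
    rw [lintegral_indicator (hS n)]
    exact (measure_le_inter_add_sdiff P A (S n)).trans (add_le_add_left (hbound n) _)
  calc P A ≤ limsup (fun n => ∫⁻ ω, (S n).indicator (f n) ω ∂P + P (A \ S n)) atTop :=
        le_limsup_of_frequently_le (.of_forall hsplit)
    _ = limsup (fun n => ∫⁻ ω, (S n).indicator (f n) ω ∂P) atTop :=
        ENNReal.limsup_add_of_right_tendsto_zero hdiff _
    _ ≤ ∫⁻ ω in A, limsup (fun n => f n ω) atTop ∂P := by
        rwa [← lintegral_indicator hA]

theorem ae_eq_one_of_measure_le_setLIntegral [IsFiniteMeasure P] {A : Set Ω} {f : Ω → ℝ≥0∞}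
    (hA : MeasurableSet A) (hf : Measurable f) (hf_le : ∀ ω, f ω ≤ 1)
    (h : P A ≤ ∫⁻ ω in A, f ω ∂P) : ∀ᵐ ω ∂P, ω ∈ A → f ω = 1 := by
  have hzero : ∫⁻ ω in A, 1 - f ω ∂P = 0 := by
    rw [lintegral_sub hf (ne_top_of_le_ne_top (measure_ne_top P A) ?_) (.of_forall hf_le)]
    · simpa using tsub_eq_zero_of_le h
    · simpa using setLIntegral_mono measurable_const fun ω _ => hf_le ω
  filter_upwards [(ae_restrict_iff' hA).mp ((lintegral_eq_zero_iff (by fun_prop)).mp hzero)]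
    with ω hω hωA
  exact le_antisymm (hf_le ω) (tsub_eq_zero_iff_le.mp (hω hωA))

theorem exists_measurableSet_ae_eventually_mem_iff [IsFiniteMeasure P] (ℱ : Filtration ℕ m0)
    {A A' : Set Ω} (hA' : MeasurableSet[⨆ n, ℱ n] A') (hAA' : A =ᵐ[P] A') :
    ∃ S : ℕ → Set Ω, (∀ n, MeasurableSet[ℱ n] (S n)) ∧
      ∀ᵐ ω ∂P, ∀ᶠ n in atTop, (ω ∈ S n ↔ ω ∈ A) := by
  set g : Ω → ℝ := A'.indicator 1
  have hlevy : ∀ᵐ ω ∂P, Tendsto (fun n => P[g | ℱ n] ω) atTop (𝓝 (g ω)) :=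
    ((integrable_const 1).indicator ((iSup_le ℱ.le) _ hA')).tendsto_ae_condExp
      (stronglyMeasurable_const.indicator hA')
  refine ⟨fun n => {ω | 1 / 2 < P[g | ℱ n] ω}, fun n => measurableSet_lt measurable_const
    stronglyMeasurable_condExp.measurable, ?_⟩
  filter_upwards [hlevy, hAA'] with ω hω hωA
  rw [show ω ∈ A ↔ ω ∈ A' from iff_of_eq hωA]
  by_cases hωA' : ω ∈ A'
  · simp only [g, Set.indicator_of_mem hωA', Pi.one_apply] at hω
    filter_upwards [hω.eventually (lt_mem_nhds one_half_lt_one)] with n hn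
    simpa [hωA'] using hn
  · simp only [g, Set.indicator_of_notMem hωA'] at hω
    filter_upwards [hω.eventually (gt_mem_nhds one_half_pos)] with n hn
    simpa [hωA'] using hn.le

theorem exists_measurable_iSup_ae_eq_of_tendstoInMeasure {m : ℕ → MeasurableSpace Ω}
    {f : ℕ → Ω → ℝ} {g : Ω → ℝ} (hfg : TendstoInMeasure P f atTop g)
    (hf : ∀ n, Measurable[m n] (f n)) : ∃ g', Measurable[⨆ n, m n] g' ∧ g =ᵐ[P] g' := by
  obtain ⟨ns, -, hns⟩ := hfg.exists_seq_tendsto_ae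
  refine ⟨fun ω => liminf (fun k => f (ns k) ω) atTop,
    Measurable.liminf fun k => (hf (ns k)).mono (le_iSup m (ns k)) le_rfl, ?_⟩
  filter_upwards [hns] with ω hω using hω.liminf_eq.symm

end Approximation

section CondDistrib

variable {Ω : Type*} {m m0 : MeasurableSpace Ω} {P : Measure[m0] Ω}

structure IsRegularCondDistrib (P : Measure[m0] Ω) (m : MeasurableSpace Ω) (V : Ω → ℝ)
    (K : Ω → ProbabilityMeasure ℝ) : Prop where
  measurable_apply : ∀ B, MeasurableSet B → Measurable[m0] fun ω => (K ω : Measure ℝ) B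
  condExp_eq : ∀ B, MeasurableSet B → (fun ω => ((K ω : Measure ℝ) B).toReal) =ᵐ[P]
    P[{ω | V ω ∈ B}.indicator (fun _ => (1 : ℝ)) | m]

variable [IsFiniteMeasure P]

namespace IsRegularCondDistrib

variable {V : Ω → ℝ} {K : Ω → ProbabilityMeasure ℝ}

theorem measure_inter_eq_setLIntegral (hK : IsRegularCondDistrib P m V K) (hm : m ≤ m0)
    (hV : Measurable V) {B : Set ℝ} (hB : MeasurableSet B) {T : Set Ω}
    (hT : MeasurableSet[m] T) : P (T ∩ {ω | V ω ∈ B}) = ∫⁻ ω in T, (K ω : Measure ℝ) B ∂P := by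
  have hVB : MeasurableSet {ω | V ω ∈ B} := hV hB
  have hreal : ∫ ω in T, ((K ω : Measure ℝ) B).toReal ∂P = P.real (T ∩ {ω | V ω ∈ B}) := by
    rw [setIntegral_congr_ae (hm _ hT) ((hK.condExp_eq B hB).mono fun _ h _ => h),
      setIntegral_condExp hm ((integrable_const 1).indicator hVB) hT,
      integral_indicator hVB, setIntegral_const, smul_eq_mul, mul_one,
      measureReal_restrict_apply hVB, Set.inter_comm]
  rw [integral_toReal (μ := P.restrict T) (hK.measurable_apply B hB).aemeasurable
    (.of_forall fun ω => prob_le_one.trans_lt ENNReal.one_lt_top)] at hreal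
  refine (ENNReal.toReal_eq_toReal_iff' (measure_ne_top _ _) ?_).mp hreal.symm
  refine ne_top_of_le_ne_top (measure_ne_top P T) ?_
  simpa using setLIntegral_mono measurable_const fun ω _ => prob_le_one (μ := (K ω : Measure ℝ))

theorem measure_setOf_mem_eq_setLIntegral (hK : IsRegularCondDistrib P m V K) (hm : m ≤ m0)
    (hV : Measurable V) {ι : Type*} [Countable ι] [MeasurableSpace ι] [MeasurableSingletonClass ι]
    {J : Ω → ι} (hJ : Measurable[m] J) {B : ι → Set ℝ} (hB : ∀ i, MeasurableSet (B i))
    {T : Set Ω} (hT : MeasurableSet[m] T) :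
    P {ω | ω ∈ T ∧ V ω ∈ B (J ω)} = ∫⁻ ω in T, (K ω : Measure ℝ) (B (J ω)) ∂P := by
  set T' : ι → Set Ω := fun i => T ∩ J ⁻¹' {i}
  have hT' : ∀ i, MeasurableSet[m] (T' i) := fun i => hT.inter (hJ (measurableSet_singleton i))
  have hdisj : Pairwise (Function.onFun Disjoint T') := fun i j hij =>
    Set.disjoint_left.mpr fun ω hi hj => hij (hi.2.symm.trans hj.2)
  have hcover : T = ⋃ i, T' i := by ext ω; simp [T']
  have hsplit : {ω | ω ∈ T ∧ V ω ∈ B (J ω)} = ⋃ i, T' i ∩ {ω | V ω ∈ B i} := by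
    ext ω; simp [T']
  rw [hsplit, measure_iUnion (f := fun i => T' i ∩ {ω | V ω ∈ B i})
      (fun i j hij => (hdisj hij).mono Set.inter_subset_left Set.inter_subset_left)
      fun i => (hm _ (hT' i)).inter (hV (hB i)),
    hcover, lintegral_iUnion (fun i => hm _ (hT' i)) hdisj]
  refine tsum_congr fun i => ?_
  rw [hK.measure_inter_eq_setLIntegral hm hV (hB i) (hT' i)]
  exact setLIntegral_congr_fun (hm _ (hT' i)) fun ω hω => by rw [hω.2]

theorem measure_inter_le_setLIntegral_gridConcentration (hK : IsRegularCondDistrib P m V K)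
    (hm : m ≤ m0) (hV : Measurable V) {c : Ω → ℝ} (hc : Measurable[m] c) {A S : Set Ω}
    (hAc : ∀ ω ∈ A, V ω = c ω) (hS : MeasurableSet[m] S) {w : ℝ} (hw : 0 < w) :
    P (A ∩ S) ≤ ∫⁻ ω in S, gridConcentration (K ω) w ∂P :=
  calc P (A ∩ S) ≤ P {ω | ω ∈ S ∧ V ω ∈ gridCell w ⌊c ω / w⌋} :=
        measure_mono fun ω hω => ⟨hω.2, hAc ω hω.1 ▸ mem_gridCell_floor hw _⟩
    _ = ∫⁻ ω in S, (K ω : Measure ℝ) (gridCell w ⌊c ω / w⌋) ∂P :=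
        hK.measure_setOf_mem_eq_setLIntegral hm hV (B := gridCell w)
          (Int.measurable_floor.comp (hc.div_const w)) (fun _ => measurableSet_Ico) hS
    _ ≤ ∫⁻ ω in S, gridConcentration (K ω) w ∂P :=
        lintegral_mono fun ω => le_iSup (fun j => (K ω : Measure ℝ) (gridCell w j)) _

end IsRegularCondDistrib

theorem tendstoInMeasure_of_isRegularCondDistrib {G : ℕ → MeasurableSpace Ω}
    (hG : ∀ n, G n ≤ m0) {Y : ℕ → Ω → ℝ} {Yinf : Ω → ℝ} {a : ℕ → ℝ} (ha : Tendsto a atTop atTop)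
    (hV : ∀ n, Measurable fun ω => a n * (Y n ω - Yinf ω)) {K : ℕ → Ω → ProbabilityMeasure ℝ}
    (hK : ∀ n, IsRegularCondDistrib P (G n) (fun ω => a n * (Y n ω - Yinf ω)) (K n))
    (hlim : ∀ᵐ ω ∂P, ∃ μ, Tendsto (fun n => K n ω) atTop (𝓝 μ)) :
    TendstoInMeasure P Y atTop Yinf := by
  rw [tendstoInMeasure_iff_dist]
  intro ε hε
  set B : ℕ → Set ℝ := fun n => {x | a n * (ε / 2) < ‖x‖}
  have hB : ∀ n, MeasurableSet (B n) := fun n => measurableSet_lt measurable_const measurable_norm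
  have hle : ∀ᶠ n in atTop,
      P {ω | ε ≤ dist (Y n ω) (Yinf ω)} ≤ ∫⁻ ω, (K n ω : Measure ℝ) (B n) ∂P := by
    filter_upwards [ha.eventually_gt_atTop 0] with n han
    have hlaw := (hK n).measure_inter_eq_setLIntegral (hG n) (hV n) (hB n) MeasurableSet.univ
    rw [Set.univ_inter, Measure.restrict_univ] at hlaw
    refine (measure_mono fun ω hω => ?_).trans_eq hlaw
    simp only [B, Set.mem_ofPred_eq, Real.dist_eq, Real.norm_eq_abs, abs_mul, abs_of_pos han]
      at hω ⊢
    exact mul_lt_mul_of_pos_left (by linarith) han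
  have hzero : Tendsto (fun n => ∫⁻ ω, (K n ω : Measure ℝ) (B n) ∂P) atTop (𝓝 0) := by
    simpa using tendsto_lintegral_of_dominated_convergence (μ := P) (f := 0) 1
      (fun n => (hK n).measurable_apply _ (hB n)) (fun n => .of_forall fun ω => prob_le_one)
      (by simp) (by
        filter_upwards [hlim] with ω ⟨μ, hμ⟩
        exact tendsto_measure_norm_gt_of_tendsto hμ (ha.atTop_mul_const (half_pos hε)))
  exact tendsto_of_tendsto_of_tendsto_of_le_of_le' tendsto_const_nhds hzero
    (.of_forall fun _ => zero_le) hle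

theorem ae_limsup_gridConcentration_eq_one (ℱ : Filtration ℕ m0) {V : ℕ → Ω → ℝ}
    (hV : ∀ n, Measurable (V n)) {K : ℕ → Ω → ProbabilityMeasure ℝ}
    (hK : ∀ n, IsRegularCondDistrib P (ℱ n) (V n) (K n)) {c : ℕ → Ω → ℝ}
    (hc : ∀ n, Measurable[ℱ n] (c n)) {A A' : Set Ω} (hA : MeasurableSet A)
    (hA' : MeasurableSet[⨆ n, ℱ n] A') (hAA' : A =ᵐ[P] A') (hAc : ∀ n, ∀ ω ∈ A, V n ω = c n ω)
    {w : ℝ} (hw : 0 < w) :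
    ∀ᵐ ω ∂P, ω ∈ A → limsup (fun n => gridConcentration (K n ω) w) atTop = 1 := by
  obtain ⟨S, hS, hSA⟩ := exists_measurableSet_ae_eventually_mem_iff ℱ hA' hAA'
  have hf_le : ∀ n ω, gridConcentration (K n ω) w ≤ 1 := fun n ω => gridConcentration_le_one _
  have hf : ∀ n, Measurable fun ω => gridConcentration (K n ω) w := fun n =>
    measurable_gridConcentration (hK n).measurable_apply
  refine ae_eq_one_of_measure_le_setLIntegral hA (.limsup hf)
    (fun ω => limsup_le_of_le (by isBoundedDefault) (.of_forall fun n => hf_le n ω)) ?_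
  exact measure_le_setLIntegral_limsup hA (fun n => ℱ.le n _ (hS n)) hf hf_le hSA fun n =>
    (hK n).measure_inter_le_setLIntegral_gridConcentration (ℱ.le n) (hV n) (hc n) (hAc n) (hS n) hw

end CondDistrib

/-- **Corollary 2.4** (general principle). If `Y_n` is `G_n`-measurable, `a_n → ∞`, and the
regular conditional distribution of `a_n(Y_n − Y_∞)` given `G_n` converges weakly, for a.e.
`ω`, to a non-degenerate limit `κ_ω`, then `Y_∞` has no point masses. -/
theorem corollary_2_4 {Ω : Type} [m0 : MeasurableSpace Ω] {P : Measure Ω}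
    [IsProbabilityMeasure P]
    (G : ℕ → MeasurableSpace Ω) (hG_le : ∀ n, G n ≤ m0) (hG_mono : Monotone G)
    (Yinf : Ω → ℝ) (Yn : ℕ → Ω → ℝ)
    (hYinf : Measurable Yinf) (hYn : ∀ n, Measurable[G n] (Yn n))
    (a : ℕ → ℝ) (ha : Tendsto a atTop atTop)
    (K : ℕ → Ω → Measure ℝ)
    (hKmeas : ∀ n B, MeasurableSet B → Measurable fun ω => K n ω B)
    (hKprob : ∀ n ω, IsProbabilityMeasure (K n ω))
    (hK : ∀ (n : ℕ) (B : Set ℝ), MeasurableSet B →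
      (fun ω => (K n ω B).toReal) =ᵐ[P]
        P[Set.indicator {ω' | a n * (Yn n ω' - Yinf ω') ∈ B} (fun _ => (1 : ℝ)) | G n])
    (κ : Ω → Measure ℝ)
    (hκ : ∀ᵐ ω ∂P, IsProbabilityMeasure (κ ω) ∧ (∀ y : ℝ, κ ω ≠ Measure.dirac y) ∧
      ∀ f : BoundedContinuousFunction ℝ ℝ,
        Tendsto (fun n => ∫ y, f y ∂(K n ω)) atTop (𝓝 (∫ y, f y ∂(κ ω)))) :
    ∀ y : ℝ, P {ω | Yinf ω = y} = 0 := by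
  intro y
  set Q : ℕ → Ω → ProbabilityMeasure ℝ := fun n ω => ⟨K n ω, hKprob n ω⟩
  have hlim : ∀ᵐ ω ∂P, ∃ μ : ProbabilityMeasure ℝ, (∀ x, (μ : Measure ℝ) ≠ Measure.dirac x) ∧
      Tendsto (fun n => Q n ω) atTop (𝓝 μ) := by
    filter_upwards [hκ] with ω ⟨hprob, hdirac, hweak⟩
    exact ⟨⟨κ ω, hprob⟩, hdirac, ProbabilityMeasure.tendsto_iff_forall_integral_tendsto.mpr hweak⟩
  set V : ℕ → Ω → ℝ := fun n ω => a n * (Yn n ω - Yinf ω)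
  have hV : ∀ n, Measurable (V n) := fun n =>
    measurable_const.mul (((hYn n).mono (hG_le n) le_rfl).sub hYinf)
  have hQ : ∀ n, IsRegularCondDistrib P (G n) (V n) (Q n) := fun n => ⟨hKmeas n, hK n⟩
  obtain ⟨Y', hY'meas, hY'⟩ := exists_measurable_iSup_ae_eq_of_tendstoInMeasure
    (tendstoInMeasure_of_isRegularCondDistrib hG_le ha hV hQ
      (hlim.mono fun ω ⟨μ, _, h⟩ => ⟨μ, h⟩)) hYn
  have hone : ∀ k : ℕ, ∀ᵐ ω ∂P, Yinf ω = y →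
      limsup (fun n => gridConcentration (Q n ω) (1 / (k + 1))) atTop = 1 := fun k =>
    ae_limsup_gridConcentration_eq_one ⟨G, hG_mono, hG_le⟩ hV hQ
      (c := fun n ω => a n * (Yn n ω - y))
      (fun n => measurable_const.mul ((hYn n).sub measurable_const))
      (hYinf (measurableSet_singleton y)) (hY'meas (measurableSet_singleton y))
      (hY'.fun_comp (· = y)) (fun n ω (hω : Yinf ω = y) => by simp [V, hω]) (by positivity)
  rw [measure_eq_zero_iff_ae_notMem]
  filter_upwards [ae_all_iff.mpr hone, hlim] with ω hω ⟨μ, hμ, hconv⟩ hy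
  obtain ⟨k, hk⟩ := exists_limsup_gridConcentration_lt_one hconv hμ
  exact hk.ne (hω k hy)

end RRUPaper
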